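/- For the skew-Laplace family, the perturbation measure has the closed form M_TV(λ) = (1/2) · λ/(1 + |λ|) for every λ ∈ ℝ; that is, sign(λ) · (1/2) ∫_ℝ |2 G_L(λ x) − 1| f_L(x) dx = (1/2) · λ/(1 + |λ|), where f_L(x) = (1/2) e^{−|x|} and G_L(t) = ∫_{−∞}^t f_L(u) du. -/

import Mathlib

open MeasureTheory Real

/-- The standard Laplace density. -/
noncomputable def laplacePdf (x : ℝ) : ℝ := (1 / 2) * Real.exp (-|x|)

/-- The standard Laplace cumulative distribution function. -/
noncomputable def laplaceCdf (t : ℝ) : ℝ := ∫ u in Set.Iic t, laplacePdf u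

/-!
Since `2 G_L(t) - 1 = sign t · (1 - e^{-|t|})`, the integrand is
`(1 - e^{-|λ| |x|}) · e^{-|x|} / 2`, a difference of two Laplace-type kernels. As
`∫ e^{-b|x|} dx = 2 / b`, the integral equals `1 - 1 / (1 + |λ|) = |λ| / (1 + |λ|)`, and
multiplying by `sign λ` turns `|λ|` into `λ`.
-/

theorem Real.sign_mul_abs (r : ℝ) : Real.sign r * |r| = r := by
  rcases lt_trichotomy r 0 with hr | rfl | hr
  · rw [Real.sign_of_neg hr, abs_of_neg hr, neg_one_mul, neg_neg]
  · rw [abs_zero, mul_zero]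
  · rw [Real.sign_of_pos hr, abs_of_pos hr, one_mul]

theorem integral_exp_neg_mul_abs {b : ℝ} (hb : 0 < b) :
    ∫ x, Real.exp (-b * |x|) = 2 / b := by
  rw [integral_comp_abs (f := fun y => Real.exp (-b * y)),
    integral_exp_mul_Ioi (neg_neg_of_pos hb), mul_zero, Real.exp_zero]
  field_simp

/-- The Bochner integral of a non-integrable function is `0`, so a nonzero value forces
integrability. -/
theorem integrable_exp_neg_mul_abs {b : ℝ} (hb : 0 < b) :
    Integrable fun x : ℝ => Real.exp (-b * |x|) :=
  Integrable.of_integral_ne_zero (by rw [integral_exp_neg_mul_abs hb]; positivity)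

theorem laplacePdf_eq (x : ℝ) : laplacePdf x = (1 / 2) * Real.exp (-1 * |x|) := by
  rw [laplacePdf, neg_one_mul]

theorem integral_laplacePdf : ∫ x, laplacePdf x = 1 := by
  simp_rw [laplacePdf_eq, integral_const_mul, integral_exp_neg_mul_abs one_pos]
  norm_num

theorem integrable_laplacePdf : Integrable laplacePdf :=
  Integrable.of_integral_ne_zero (by rw [integral_laplacePdf]; exact one_ne_zero)

theorem laplaceCdf_of_nonpos {t : ℝ} (ht : t ≤ 0) :
    laplaceCdf t = (1 / 2) * Real.exp t := by
  have hpdf : Set.EqOn laplacePdf (fun u => (1 / 2) * Real.exp u) (Set.Iic t) := fun u hu => by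
    rw [laplacePdf, abs_of_nonpos (le_trans hu ht), neg_neg]
  rw [laplaceCdf, setIntegral_congr_fun measurableSet_Iic hpdf, integral_const_mul,
    integral_exp_Iic]

theorem integral_Ioi_laplacePdf_of_nonneg {t : ℝ} (ht : 0 ≤ t) :
    ∫ u in Set.Ioi t, laplacePdf u = (1 / 2) * Real.exp (-t) := by
  have hpdf : Set.EqOn laplacePdf (fun u => (1 / 2) * Real.exp (-u)) (Set.Ioi t) := fun u hu => by
    rw [laplacePdf, abs_of_pos (lt_of_le_of_lt ht hu)]
  rw [setIntegral_congr_fun measurableSet_Ioi hpdf, integral_const_mul, integral_exp_neg_Ioi]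

theorem laplaceCdf_add_integral_Ioi_laplacePdf (t : ℝ) :
    laplaceCdf t + ∫ u in Set.Ioi t, laplacePdf u = 1 := by
  rw [laplaceCdf, ← setIntegral_union (Set.Iic_disjoint_Ioi le_rfl) measurableSet_Ioi
    integrable_laplacePdf.integrableOn integrable_laplacePdf.integrableOn,
    Set.Iic_union_Ioi, setIntegral_univ, integral_laplacePdf]

theorem laplaceCdf_of_nonneg {t : ℝ} (ht : 0 ≤ t) :
    laplaceCdf t = 1 - (1 / 2) * Real.exp (-t) := by
  linarith [laplaceCdf_add_integral_Ioi_laplacePdf t, integral_Ioi_laplacePdf_of_nonneg ht]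

theorem abs_two_mul_laplaceCdf_sub_one (t : ℝ) :
    |2 * laplaceCdf t - 1| = 1 - Real.exp (-|t|) := by
  rcases le_or_gt t 0 with ht | ht
  · have hexp : Real.exp t ≤ 1 := Real.exp_le_one_iff.mpr ht
    rw [laplaceCdf_of_nonpos ht, abs_of_nonpos ht, neg_neg, abs_of_nonpos (by linarith)]
    ring
  · have hexp : Real.exp (-t) ≤ 1 := Real.exp_le_one_iff.mpr (by linarith)
    rw [laplaceCdf_of_nonneg ht.le, abs_of_pos ht, abs_of_nonneg (by linarith)]
    ring

theorem integral_one_sub_exp_neg_mul_abs_mul_laplacePdf {a : ℝ} (ha : 0 ≤ a) :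
    ∫ x, (1 - Real.exp (-a * |x|)) * laplacePdf x = a / (1 + a) := by
  have h1a : 0 < 1 + a := by linarith
  have hsplit : ∀ x : ℝ, (1 - Real.exp (-a * |x|)) * laplacePdf x
      = (1 / 2) * Real.exp (-1 * |x|) - (1 / 2) * Real.exp (-(1 + a) * |x|) := fun x => by
    rw [laplacePdf_eq, sub_mul, one_mul, mul_left_comm, ← Real.exp_add]
    ring_nf
  simp_rw [hsplit]
  rw [integral_sub ((integrable_exp_neg_mul_abs one_pos).const_mul _)
      ((integrable_exp_neg_mul_abs h1a).const_mul _), integral_const_mul, integral_const_mul,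
    integral_exp_neg_mul_abs one_pos, integral_exp_neg_mul_abs h1a]
  field_simp
  ring

/-- For the skew-Laplace family the perturbation measure has the
closed form M_TV(λ) = (1/2) · λ/(1 + |λ|). -/
theorem skew_laplace_MTV_closed_form (l : ℝ) :
    Real.sign l * ((1 / 2) * ∫ x, |2 * laplaceCdf (l * x) - 1| * laplacePdf x)
      = (1 / 2) * (l / (1 + |l|)) := by
  have hintegrand : ∀ x, |2 * laplaceCdf (l * x) - 1| * laplacePdf x
      = (1 - Real.exp (-|l| * |x|)) * laplacePdf x := fun x => by
    rw [abs_two_mul_laplaceCdf_sub_one, abs_mul, neg_mul]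
  simp_rw [hintegrand, integral_one_sub_exp_neg_mul_abs_mul_laplacePdf (abs_nonneg l)]
  calc Real.sign l * ((1 / 2) * (|l| / (1 + |l|)))
      = (1 / 2) * (Real.sign l * |l| / (1 + |l|)) := by ring
    _ = (1 / 2) * (l / (1 + |l|)) := by rw [Real.sign_mul_abs]
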